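/- The generating function G(s,t) = ∑_{n=0}^∞ sⁿ J_n(t), where J_n are the simplex integrals of products of hyperbolic sines (J₀(t)=sinh(ct)), equals G(s,t) = √(c/(s+c)) · sinh(t√(c(s+c))) for s > 0, t ≥ 0. -/

import Mathlib

/-!
Since `J_{n+1}(t) = ∫₀ᵗ sinh(cu) J_n(t-u) du`, every `J_n` is an odd entire series in the
divided powers `tᵏ/k!`, on which this convolution simply adds degrees (plus one). Starting from
the sinh series, the hockey-stick identity gives
`J_n(t) = ∑ₘ C(m,n) c^(2m+1-n) t^(2m+1)/(2m+1)!`, and the binomial theorem then sums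
`∑ₙ sⁿ J_n(t) = ∑ₘ c^(m+1) (s+c)^m t^(2m+1)/(2m+1)!`, which is the sinh series of
`√(c/(s+c)) sinh(t√(c(s+c)))`. Geometric bounds on the coefficients make every series
absolutely convergent, which justifies integrating termwise and exchanging the sums.
-/

open Real MeasureTheory

/-- Iterated simplex integral with `s₀ = a`, `s_{n+1} = t`. -/
noncomputable def iterInt (f : ℝ → ℝ) : ℕ → ℝ → ℝ → ℝ
  | 0, a, t => f (t - a)
  | n+1, a, t => ∫ s in a..t, f (s - a) * iterInt f n s t

/-- `J_n(t)`: simplex integral of products of hyperbolic sines of increments. -/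
noncomputable def J (c : ℝ) (n : ℕ) (t : ℝ) : ℝ :=
  iterInt (fun u => Real.sinh (c * u)) n 0 t

open Finset Nat

theorem HasSum.sum_antidiagonal {A α : Type*} [AddCommMonoid A] [HasAntidiagonal A]
    [AddCommMonoid α] [TopologicalSpace α] [ContinuousAdd α] [T3Space α]
    {f : A × A → α} {s : α} (h : HasSum f s) :
    HasSum (fun n => ∑ p ∈ antidiagonal n, f p) s :=
  (HasAntidiagonal.sigmaAntidiagonalEquivProd.hasSum_iff.mpr h).sigma
    fun n => (antidiagonal n).hasSum f

theorem abs_le_abs_and_abs_sub_le_abs_of_mem_uIoc {t u : ℝ} (hu : u ∈ Set.uIoc 0 t) :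
    |u| ≤ |t| ∧ |t - u| ≤ |t| := by
  rcases Set.mem_uIoc.1 hu with ⟨h1, h2⟩ | ⟨h1, h2⟩
  · rw [abs_of_pos (h1.trans_le h2)]
    exact ⟨abs_le.2 ⟨by linarith, h2⟩, abs_le.2 ⟨by linarith, by linarith⟩⟩
  · rw [abs_of_neg (h1.trans_le h2)]
    exact ⟨abs_le.2 ⟨by linarith, by linarith⟩, abs_le.2 ⟨by linarith, by linarith⟩⟩

noncomputable def dividedPow (k : ℕ) (x : ℝ) : ℝ := x ^ k / k !

@[fun_prop]
theorem continuous_dividedPow (k : ℕ) : Continuous (dividedPow k) := by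
  unfold dividedPow; fun_prop

theorem dividedPow_zero (x : ℝ) : dividedPow 0 x = 1 := by simp [dividedPow]

theorem dividedPow_succ_zero (k : ℕ) : dividedPow (k + 1) 0 = 0 := by simp [dividedPow]

theorem hasDerivAt_dividedPow_succ (k : ℕ) (x : ℝ) :
    HasDerivAt (dividedPow (k + 1)) (dividedPow k x) x := by
  show HasDerivAt (fun x => x ^ (k + 1) / ((k + 1)! : ℝ)) _ x
  refine ((hasDerivAt_pow (k + 1) x).div_const ((k + 1)! : ℝ)).congr_deriv ?_
  rw [dividedPow, Nat.factorial_succ, add_tsub_cancel_right]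
  push_cast
  field_simp

theorem abs_dividedPow_le_abs {k : ℕ} {x y : ℝ} (h : |x| ≤ |y|) :
    |dividedPow k x| ≤ |dividedPow k y| := by
  simp only [dividedPow, abs_div, abs_pow, Nat.abs_cast]
  gcongr

theorem integral_dividedPow_mul_dividedPow_sub (i j : ℕ) (t : ℝ) :
    ∫ u in (0 : ℝ)..t, dividedPow i u * dividedPow j (t - u) = dividedPow (i + j + 1) t := by
  have hv : ∀ k u, HasDerivAt (fun u => -dividedPow (k + 1) (t - u)) (dividedPow k (t - u)) u :=
    fun k u => by simpa using ((hasDerivAt_dividedPow_succ k (t - u)).comp_const_sub t u).fun_neg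
  have hint : ∀ k, IntervalIntegrable (fun u => dividedPow k (t - u)) volume 0 t :=
    fun k => ((continuous_dividedPow k).comp (continuous_sub_left t)).intervalIntegrable _ _
  induction i generalizing j with
  | zero =>
    simp only [dividedPow_zero, one_mul, zero_add]
    rw [intervalIntegral.integral_eq_sub_of_hasDerivAt (fun u _ => hv j u) (hint j)]
    simp [dividedPow_succ_zero]
  | succ i ih =>
    rw [intervalIntegral.integral_mul_deriv_eq_deriv_mul
      (fun u _ => hasDerivAt_dividedPow_succ i u) (fun u _ => hv j u)
      ((continuous_dividedPow i).intervalIntegrable _ _) (hint j)]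
    simp only [sub_self, dividedPow_succ_zero, mul_neg, mul_zero, neg_zero, sub_zero,
      intervalIntegral.integral_neg, sub_neg_eq_add, zero_add, ih]
    ring_nf

def GeomBounded (a : ℕ → ℝ) : Prop := ∃ C : ℝ, ∀ m, |a m| ≤ C ^ (m + 1)

noncomputable def oddSeries (a : ℕ → ℝ) (t : ℝ) : ℝ :=
  ∑' m, a m * dividedPow (2 * m + 1) t

-- Odd degrees `2i + 1` and `2j + 1` convolve to degree `2(i + j + 1) + 1`.
def oddConv (a b : ℕ → ℝ) : ℕ → ℝ
  | 0 => 0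
  | M + 1 => ∑ p ∈ antidiagonal M, a p.1 * b p.2

theorem geomBounded_oddConv {a b : ℕ → ℝ} (ha : GeomBounded a) (hb : GeomBounded b) :
    GeomBounded (oddConv a b) := by
  obtain ⟨C, hC⟩ := ha
  obtain ⟨D, hD⟩ := hb
  set E := max C D
  have hC0 : 0 ≤ C := by simpa using (abs_nonneg _).trans (hC 0)
  have hD0 : 0 ≤ D := by simpa using (abs_nonneg _).trans (hD 0)
  have hE : 0 ≤ E := hC0.trans (le_max_left C D)
  have haE m : |a m| ≤ E ^ (m + 1) := (hC m).trans (by gcongr; exact le_max_left C D)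
  have hbE m : |b m| ≤ E ^ (m + 1) := (hD m).trans (by gcongr; exact le_max_right C D)
  refine ⟨2 * E, fun m => ?_⟩
  cases m with
  | zero => simp [oddConv, hE]
  | succ M =>
    calc |oddConv a b (M + 1)| ≤ ∑ p ∈ antidiagonal M, |a p.1| * |b p.2| := by
          simpa only [oddConv, abs_mul] using
            abs_sum_le_sum_abs (fun p : ℕ × ℕ => a p.1 * b p.2) (antidiagonal M)
      _ ≤ ∑ p ∈ antidiagonal M, E ^ (M + 2) := by
          refine sum_le_sum fun p hp => ?_
          rw [HasAntidiagonal.mem_antidiagonal] at hp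
          calc |a p.1| * |b p.2| ≤ E ^ (p.1 + 1) * E ^ (p.2 + 1) := by
                gcongr
                exacts [haE _, hbE _]
            _ = E ^ (M + 2) := by rw [← pow_add, ← hp]; ring_nf
      _ = (M + 1) * E ^ (M + 2) := by simp
      _ ≤ 2 ^ (M + 2) * E ^ (M + 2) := by
          gcongr
          exact_mod_cast (Nat.lt_two_pow_self).le.trans' (by omega)
      _ = (2 * E) ^ (M + 1 + 1) := by ring

namespace GeomBounded

variable {a b : ℕ → ℝ}

theorem summable_norm (ha : GeomBounded a) (x : ℝ) :
    Summable fun m => ‖a m * dividedPow (2 * m + 1) x‖ := by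
  obtain ⟨C, hC⟩ := ha
  refine Summable.of_nonneg_of_le (fun _ => norm_nonneg _) (fun m => ?_)
    ((Real.summable_pow_div_factorial (C * x ^ 2)).mul_left (C * |x|))
  have hfact : (m ! : ℝ) ≤ (2 * m + 1)! := by exact_mod_cast Nat.factorial_le (by omega)
  calc ‖a m * dividedPow (2 * m + 1) x‖ = |a m| * (|x| ^ (2 * m + 1) / (2 * m + 1)!) := by
        simp [dividedPow]
    _ ≤ C ^ (m + 1) * (|x| ^ (2 * m + 1) / m !) :=
        mul_le_mul (hC m) (by gcongr) (by positivity) ((abs_nonneg _).trans (hC m))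
    _ = C * |x| * ((C * x ^ 2) ^ m / m !) := by
        rw [← sq_abs x]
        ring

theorem hasSum_oddSeries (ha : GeomBounded a) (x : ℝ) :
    HasSum (fun m => a m * dividedPow (2 * m + 1) x) (oddSeries a x) :=
  (ha.summable_norm x).of_norm.hasSum

theorem hasSum_integral_oddSeries_mul_sub (ha : GeomBounded a) (hb : GeomBounded b) (t : ℝ) :
    HasSum (fun p : ℕ × ℕ => a p.1 * b p.2 * dividedPow (2 * (p.1 + p.2) + 3) t)
      (∫ u in (0 : ℝ)..t, oddSeries a u * oddSeries b (t - u)) := by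
  set F : ℕ × ℕ → ℝ → ℝ := fun p u =>
    a p.1 * dividedPow (2 * p.1 + 1) u * (b p.2 * dividedPow (2 * p.2 + 1) (t - u))
  have hF p :
      ∫ u in (0 : ℝ)..t, F p u = a p.1 * b p.2 * dividedPow (2 * (p.1 + p.2) + 3) t := by
    simp only [F, mul_mul_mul_comm, intervalIntegral.integral_const_mul,
      integral_dividedPow_mul_dividedPow_sub]
    ring_nf
  have hlim u : HasSum (fun p => F p u) (oddSeries a u * oddSeries b (t - u)) := by
    have hprod := summable_mul_of_summable_norm (ha.summable_norm u) (hb.summable_norm (t - u))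
    exact (ha.hasSum_oddSeries u).mul (hb.hasSum_oddSeries (t - u)) hprod
  simp only [← hF]
  refine intervalIntegral.hasSum_integral_of_dominated_convergence
    (fun p _ => ‖a p.1 * dividedPow (2 * p.1 + 1) t‖ * ‖b p.2 * dividedPow (2 * p.2 + 1) t‖)
    (fun p => (by fun_prop : Continuous (F p)).aestronglyMeasurable) (fun p => ?_) ?_
    intervalIntegrable_const ?_
  · refine .of_forall fun u hu => ?_
    obtain ⟨hu, htu⟩ := abs_le_abs_and_abs_sub_le_abs_of_mem_uIoc hu
    simp only [F, norm_mul]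
    gcongr
    exacts [abs_dividedPow_le_abs hu, abs_dividedPow_le_abs htu]
  · exact .of_forall fun u _ => (ha.summable_norm t).mul_of_nonneg (hb.summable_norm t)
      (fun _ => norm_nonneg _) (fun _ => norm_nonneg _)
  · exact .of_forall fun u _ => hlim u

theorem integral_oddSeries_mul_sub (ha : GeomBounded a) (hb : GeomBounded b) (t : ℝ) :
    ∫ u in (0 : ℝ)..t, oddSeries a u * oddSeries b (t - u) = oddSeries (oddConv a b) t := by
  have h := (ha.hasSum_integral_oddSeries_mul_sub hb t).sum_antidiagonal
  have hterm M : ∑ p ∈ antidiagonal M, a p.1 * b p.2 * dividedPow (2 * (p.1 + p.2) + 3) t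
      = oddConv a b (M + 1) * dividedPow (2 * (M + 1) + 1) t := by
    rw [oddConv, sum_mul]
    refine sum_congr rfl fun p hp => ?_
    rw [HasAntidiagonal.mem_antidiagonal.1 hp]
    ring_nf
  simp only [hterm] at h
  rw [oddSeries, ((hasSum_nat_add_iff (f := fun m => oddConv a b m * dividedPow (2 * m + 1) t)
    1).1 h).tsum_eq]
  simp [oddConv]

end GeomBounded

theorem geomBounded_pow_two_mul_add_one (κ : ℝ) : GeomBounded fun m => κ ^ (2 * m + 1) := by
  refine ⟨κ ^ 2 + 1, fun m => ?_⟩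
  have hκ : |κ| ≤ κ ^ 2 + 1 := by nlinarith [abs_nonneg κ, sq_abs κ]
  calc |κ ^ (2 * m + 1)| = (κ ^ 2) ^ m * |κ| := by rw [abs_pow, pow_succ, pow_mul, sq_abs]
    _ ≤ (κ ^ 2 + 1) ^ m * (κ ^ 2 + 1) := by gcongr; linarith [sq_nonneg κ]
    _ = (κ ^ 2 + 1) ^ (m + 1) := (pow_succ _ _).symm

theorem oddSeries_pow_two_mul_add_one (κ t : ℝ) :
    oddSeries (fun m => κ ^ (2 * m + 1)) t = sinh (κ * t) := by
  rw [← (Real.hasSum_sinh (κ * t)).tsum_eq, oddSeries]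
  simp only [dividedPow, mul_pow, mul_div_assoc]

theorem oddSeries_const_mul (r : ℝ) (a : ℕ → ℝ) (t : ℝ) :
    oddSeries (fun m => r * a m) t = r * oddSeries a t := by
  simp only [oddSeries, mul_assoc, tsum_mul_left]

theorem iterInt_eq_iterInt_zero_sub (f : ℝ → ℝ) (n : ℕ) (a t : ℝ) :
    iterInt f n a t = iterInt f n 0 (t - a) := by
  induction n generalizing a t with
  | zero => simp [iterInt]
  | succ n ih =>
    have hshift := intervalIntegral.integral_comp_sub_right
      (fun s => f s * iterInt f n 0 (t - a - s)) (a := a) (b := t) a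
    simp only [sub_self, sub_sub_sub_cancel_right] at hshift
    calc iterInt f (n + 1) a t = ∫ s in a..t, f (s - a) * iterInt f n 0 (t - s) :=
          intervalIntegral.integral_congr fun s _ => by rw [ih s t]
      _ = ∫ s in (0 : ℝ)..t - a, f (s - 0) * iterInt f n s (t - a) := by
          rw [hshift]
          exact intervalIntegral.integral_congr fun s _ => by rw [ih s (t - a), sub_zero]

theorem J_zero (c t : ℝ) : J c 0 t = sinh (c * t) := by simp [J, iterInt]

theorem J_succ (c : ℝ) (n : ℕ) (t : ℝ) :
    J c (n + 1) t = ∫ u in (0 : ℝ)..t, sinh (c * u) * J c n (t - u) := by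
  refine intervalIntegral.integral_congr fun u _ => ?_
  simp only [J, sub_zero]
  rw [iterInt_eq_iterInt_zero_sub]

-- `c ^ (m + 1) * c ^ (m - n)` stands for `c ^ (2m + 1 - n)`; the truncated subtraction only
-- matters for `m < n`, where `m.choose n = 0`.
noncomputable def sinhSimplexCoeff (c : ℝ) (n m : ℕ) : ℝ :=
  m.choose n * c ^ (m + 1) * c ^ (m - n)

theorem sinhSimplexCoeff_zero (c : ℝ) : sinhSimplexCoeff c 0 = fun m => c ^ (2 * m + 1) := by
  ext m
  simp only [sinhSimplexCoeff, Nat.choose_zero_right, Nat.cast_one, one_mul, Nat.sub_zero,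
    ← pow_add]
  ring_nf

theorem sinhSimplexCoeff_of_lt (c : ℝ) {n m : ℕ} (h : m < n) : sinhSimplexCoeff c n m = 0 := by
  simp [sinhSimplexCoeff, Nat.choose_eq_zero_of_lt h]

theorem sum_antidiagonal_choose_snd (n M : ℕ) :
    ∑ p ∈ antidiagonal M, p.2.choose n = (M + 1).choose (n + 1) := by
  induction M with
  | zero => simp [Nat.choose_succ_succ]
  | succ M ih => rw [Finset.Nat.sum_antidiagonal_succ, ih, Nat.choose_succ_succ' (M + 1)]

theorem oddConv_sinhSimplexCoeff (c : ℝ) (n : ℕ) :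
    oddConv (sinhSimplexCoeff c 0) (sinhSimplexCoeff c n) = sinhSimplexCoeff c (n + 1) := by
  ext m
  cases m with
  | zero => simp [oddConv, sinhSimplexCoeff]
  | succ M =>
    have hterm : ∀ p ∈ antidiagonal M, sinhSimplexCoeff c 0 p.1 * sinhSimplexCoeff c n p.2
        = p.2.choose n * (c ^ (M + 2) * c ^ (M - n)) := by
      intro p hp
      rw [HasAntidiagonal.mem_antidiagonal] at hp
      rcases lt_or_ge p.2 n with h | h
      · simp [sinhSimplexCoeff_of_lt c h, Nat.choose_eq_zero_of_lt h]
      · simp only [sinhSimplexCoeff, Nat.choose_zero_right, Nat.cast_one, one_mul, Nat.sub_zero]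
        have hexp : M + 2 + (M - n) = p.1 + 1 + p.1 + (p.2 + 1 + (p.2 - n)) := by omega
        rw [← pow_add c (M + 2), hexp]
        ring
    rw [oddConv, sum_congr rfl hterm, ← sum_mul, ← Nat.cast_sum, sum_antidiagonal_choose_snd,
      sinhSimplexCoeff]
    simp only [Nat.add_sub_add_right]
    ring

theorem geomBounded_sinhSimplexCoeff (c : ℝ) (n : ℕ) : GeomBounded (sinhSimplexCoeff c n) := by
  have h0 : GeomBounded (sinhSimplexCoeff c 0) :=
    sinhSimplexCoeff_zero c ▸ geomBounded_pow_two_mul_add_one c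
  induction n with
  | zero => exact h0
  | succ n ih => exact oddConv_sinhSimplexCoeff c n ▸ geomBounded_oddConv h0 ih

theorem J_eq_oddSeries (c : ℝ) (n : ℕ) (t : ℝ) :
    J c n t = oddSeries (sinhSimplexCoeff c n) t := by
  induction n generalizing t with
  | zero => rw [J_zero, sinhSimplexCoeff_zero, oddSeries_pow_two_mul_add_one]
  | succ n ih =>
    have hsinh u : sinh (c * u) = oddSeries (sinhSimplexCoeff c 0) u := by
      rw [sinhSimplexCoeff_zero, oddSeries_pow_two_mul_add_one]
    simp only [J_succ, ih, hsinh]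
    rw [GeomBounded.integral_oddSeries_mul_sub (geomBounded_sinhSimplexCoeff c 0)
      (geomBounded_sinhSimplexCoeff c n), oddConv_sinhSimplexCoeff]

theorem abs_sinhSimplexCoeff (c : ℝ) (n m : ℕ) :
    |sinhSimplexCoeff c n m| = sinhSimplexCoeff |c| n m := by
  simp [sinhSimplexCoeff, abs_mul, abs_pow]

theorem hasSum_pow_mul_sinhSimplexCoeff (s c : ℝ) (m : ℕ) :
    HasSum (fun n => s ^ n * sinhSimplexCoeff c n m) (c ^ (m + 1) * (s + c) ^ m) := by
  have hzero n (hn : n ∉ range (m + 1)) : s ^ n * sinhSimplexCoeff c n m = 0 := by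
    rw [sinhSimplexCoeff_of_lt c (by simpa using hn), mul_zero]
  have hsum :
      ∑ n ∈ range (m + 1), s ^ n * sinhSimplexCoeff c n m = c ^ (m + 1) * (s + c) ^ m := by
    rw [add_pow, mul_sum]
    refine sum_congr rfl fun n _ => ?_
    simp only [sinhSimplexCoeff]
    ring
  exact hsum ▸ hasSum_sum_of_ne_finset_zero hzero

theorem geomBounded_pow_succ_mul_pow (x y : ℝ) : GeomBounded fun m => x ^ (m + 1) * y ^ m := by
  refine ⟨|x| * (|y| + 1), fun m => ?_⟩
  rw [abs_mul, abs_pow, abs_pow, mul_pow]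
  gcongr
  calc |y| ^ m ≤ (|y| + 1) ^ m := by gcongr; linarith
    _ ≤ (|y| + 1) ^ (m + 1) := pow_le_pow_right₀ (by linarith [abs_nonneg y]) m.le_succ

theorem tsum_pow_mul_oddSeries_sinhSimplexCoeff (s c t : ℝ) :
    ∑' n, s ^ n * oddSeries (sinhSimplexCoeff c n) t
      = oddSeries (fun m => c ^ (m + 1) * (s + c) ^ m) t := by
  set f : ℕ → ℕ → ℝ := fun m n =>
    s ^ n * (sinhSimplexCoeff c n m * dividedPow (2 * m + 1) t)
  have hrow σ γ m x : HasSum (fun n => σ ^ n * (sinhSimplexCoeff γ n m * x))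
      (γ ^ (m + 1) * (σ + γ) ^ m * x) := by
    simpa only [mul_assoc] using (hasSum_pow_mul_sinhSimplexCoeff σ γ m).mul_right x
  have hnorm m n : ‖Function.uncurry f (m, n)‖
      = |s| ^ n * (sinhSimplexCoeff |c| n m * |dividedPow (2 * m + 1) t|) := by
    simp [f, abs_sinhSimplexCoeff]
  have hf : Summable (Function.uncurry f) := by
    refine .of_norm ((summable_prod_of_nonneg fun _ => norm_nonneg _).2 ⟨fun m => ?_, ?_⟩)
    · simpa only [hnorm] using (hrow |s| |c| m _).summable
    · simp only [hnorm, (hrow _ _ _ _).tsum_eq]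
      refine ((geomBounded_pow_succ_mul_pow |c| (|s| + |c|)).summable_norm t).congr fun m => ?_
      rw [norm_mul, Real.norm_of_nonneg (by positivity), Real.norm_eq_abs]
  calc ∑' n, s ^ n * oddSeries (sinhSimplexCoeff c n) t = ∑' n, ∑' m, f m n := by
        simp only [oddSeries, f, tsum_mul_left]
    _ = ∑' m, ∑' n, f m n := hf.tsum_comm
    _ = _ := by simp only [oddSeries, f, (hrow s c _ _).tsum_eq]

theorem generating_function_sinh_general (c : ℝ) (hc : 0 < c) (s t : ℝ) (hs : 0 < s) :
    ∑' n : ℕ, s ^ n * J c n t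
      = Real.sqrt (c / (s + c)) * Real.sinh (t * Real.sqrt (c * (s + c))) := by
  have hsc : 0 < s + c := by linarith
  set κ := √(c * (s + c))
  have hκ : √(c / (s + c)) * κ = c := by
    rw [← Real.sqrt_mul (by positivity), show c / (s + c) * (c * (s + c)) = c ^ 2 by field_simp,
      Real.sqrt_sq hc.le]
  have hcoeff m : c ^ (m + 1) * (s + c) ^ m = √(c / (s + c)) * κ ^ (2 * m + 1) := by
    rw [pow_succ κ, pow_mul, Real.sq_sqrt (by positivity), mul_left_comm, hκ, mul_pow]
    ring
  simp only [J_eq_oddSeries, tsum_pow_mul_oddSeries_sinhSimplexCoeff, hcoeff, oddSeries_const_mul,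
    oddSeries_pow_two_mul_add_one, mul_comm κ t]

/-- the generating function `G(s,t) = ∑ sⁿ J_n(t)` equals
`√(c/(s+c)) sinh(t√(c(s+c)))`. -/
theorem generating_function_sinh (c : ℝ) (hc : 0 < c) (s t : ℝ) (hs : 0 < s) (ht : 0 ≤ t) :
    ∑' n : ℕ, s ^ n * J c n t
      = Real.sqrt (c / (s + c)) * Real.sinh (t * Real.sqrt (c * (s + c))) :=
  generating_function_sinh_general c hc s t hs
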